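/- Let φ be a hybrid logic formula using operators from {◇,↓,@} (no □) and only the monotone Boolean connectives ∧, ∨, ⊥, ⊤. Then φ is satisfiable over the class of all frames if and only if K₁,g₁,w₁ ⊨ φ, and φ is satisfiable over the class of transitive frames if and only if K₁,g₁,w₁ ⊨ φ. -/

import Mathlib

/-- Hybrid logic formulas over countable sets of atomic propositions,
nominals and state variables (each indexed by `ℕ`). -/
inductive HForm : Type where
  | prop : ℕ → HForm
  | nom  : ℕ → HForm
  | svar : ℕ → HForm
  | top  : HForm
  | bot  : HForm
  | neg  : HForm → HForm
  | and  : HForm → HForm → HForm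
  | or   : HForm → HForm → HForm
  | dia  : HForm → HForm
  | box  : HForm → HForm
  | bind : ℕ → HForm → HForm
  | atN  : ℕ → HForm → HForm
  | atV  : ℕ → HForm → HForm
deriving DecidableEq

/-- A (hybrid) Kripke structure: states, transition relation, labeling of
propositions by sets of states and of nominals by (single) states. -/
structure Kripke (W : Type) where
  rel : W → W → Prop
  vProp : ℕ → Set W
  vNom : ℕ → W

/-- Update of an assignment: `updAsg g x w` is the `x`-variant of `g` mapping `x` to `w`. -/
def updAsg {W : Type} (g : ℕ → W) (x : ℕ) (w : W) : ℕ → W :=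
  fun y => if y = x then w else g y

/-- The satisfaction relation `K, g, w ⊨ φ`. -/
def Sat {W : Type} (K : Kripke W) : (ℕ → W) → W → HForm → Prop
  | _, w, .prop p => w ∈ K.vProp p
  | _, w, .nom i => w = K.vNom i
  | g, w, .svar x => w = g x
  | _, _, .top => True
  | _, _, .bot => False
  | g, w, .neg φ => ¬ Sat K g w φ
  | g, w, .and φ ψ => Sat K g w φ ∧ Sat K g w ψ
  | g, w, .or φ ψ => Sat K g w φ ∨ Sat K g w ψ
  | g, w, .dia φ => ∃ v, K.rel w v ∧ Sat K g v φ
  | g, w, .box φ => ∀ v, K.rel w v → Sat K g v φ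
  | g, w, .bind x φ => Sat K (updAsg g x w) w φ
  | g, _, .atN i φ => Sat K g (K.vNom i) φ
  | g, _, .atV x φ => Sat K g (g x) φ

/-- Satisfiability over the class of all frames. -/
def SatisfiableAll (φ : HForm) : Prop :=
  ∃ (W : Type) (K : Kripke W) (g : ℕ → W) (w : W), Sat K g w φ

/-- Satisfiability over the class of transitive frames. -/
def SatisfiableTrans (φ : HForm) : Prop :=
  ∃ (W : Type) (K : Kripke W), Transitive K.rel ∧ ∃ (g : ℕ → W) (w : W), Sat K g w φ

/-- Satisfiability over the class of total frames. -/
def SatisfiableTotal (φ : HForm) : Prop :=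
  ∃ (W : Type) (K : Kripke W), (∀ w, ∃ v, K.rel w v) ∧ ∃ (g : ℕ → W) (w : W), Sat K g w φ

/-- Satisfiability over the class of ER frames. -/
def SatisfiableER (φ : HForm) : Prop :=
  ∃ (W : Type) (K : Kripke W), Equivalence K.rel ∧ ∃ (g : ℕ → W) (w : W), Sat K g w φ

/-- The singleton reflexive Kripke structure `K₁` labeling every proposition and
nominal with its unique state. -/
def K1 : Kripke Unit := ⟨fun _ _ => True, fun _ => Set.univ, fun _ => ()⟩

/-- The assignment `g₁` mapping every state variable to the unique state of `K₁`. -/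
def g1 : ℕ → Unit := fun _ => ()

/-- Unary operators of hybrid logic: `◇`, `□`, `↓x.`, `@_i` (nominal), `@_x` (state variable). -/
inductive HOp : Type where
  | dia : HOp
  | box : HOp
  | bind : ℕ → HOp
  | atN : ℕ → HOp
  | atV : ℕ → HOp
deriving DecidableEq

def applyOp : HOp → HForm → HForm
  | .dia, φ => .dia φ
  | .box, φ => .box φ
  | .bind x, φ => .bind x φ
  | .atN i, φ => .atN i φ
  | .atV x, φ => .atV x φ

/-- Apply a sequence of operators to a formula (head of the list outermost). -/
def applyOps : List HOp → HForm → HForm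
  | [], φ => φ
  | o :: os, φ => applyOp o (applyOps os φ)

/-- The formula uses only the monotone Boolean connectives `∧`, `∨`, `⊥`, `⊤`
(i.e. no negation occurs). -/
def MonotoneForm : HForm → Prop
  | .prop _ => True
  | .nom _ => True
  | .svar _ => True
  | .top => True
  | .bot => True
  | .neg _ => False
  | .and φ ψ => MonotoneForm φ ∧ MonotoneForm ψ
  | .or φ ψ => MonotoneForm φ ∧ MonotoneForm ψ
  | .dia φ => MonotoneForm φ
  | .box φ => MonotoneForm φ
  | .bind _ φ => MonotoneForm φ
  | .atN _ φ => MonotoneForm φ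
  | .atV _ φ => MonotoneForm φ

/-- The formula does not contain the modal operator `□`. -/
def BoxFree : HForm → Prop
  | .prop _ => True
  | .nom _ => True
  | .svar _ => True
  | .top => True
  | .bot => True
  | .neg φ => BoxFree φ
  | .and φ ψ => BoxFree φ ∧ BoxFree ψ
  | .or φ ψ => BoxFree φ ∧ BoxFree ψ
  | .dia φ => BoxFree φ
  | .box _ => False
  | .bind _ φ => BoxFree φ
  | .atN _ φ => BoxFree φ
  | .atV _ φ => BoxFree φ

/-! Every Kripke structure maps onto `K₁`, and satisfaction of positive box-free formulas
is preserved along maps that preserve the accessibility relation, the propositional labels and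
the nominals: `↓` and `@` only move the evaluation point or the assignment, and these moves
commute with the map. Conversely `K₁` is itself a (transitive) witness. -/

structure KripkeHom {W W' : Type} (K : Kripke W) (K' : Kripke W') where
  toFun : W → W'
  map_rel : ∀ {w v}, K.rel w v → K'.rel (toFun w) (toFun v)
  map_prop : ∀ {p w}, w ∈ K.vProp p → toFun w ∈ K'.vProp p
  map_nom : ∀ i, toFun (K.vNom i) = K'.vNom i

theorem comp_updAsg {W W' : Type} (f : W → W') (g : ℕ → W) (x : ℕ) (w : W) :
    f ∘ updAsg g x w = updAsg (f ∘ g) x (f w) := by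
  funext y
  by_cases hy : y = x <;> simp [updAsg, hy]

namespace KripkeHom

variable {W W' : Type} {K : Kripke W} {K' : Kripke W'}

theorem sat_map (f : KripkeHom K K') {φ : HForm} (hm : MonotoneForm φ) (hb : BoxFree φ)
    {g : ℕ → W} {w : W} (hs : Sat K g w φ) : Sat K' (f.toFun ∘ g) (f.toFun w) φ := by
  induction φ generalizing g w with
  | prop p => exact f.map_prop hs
  | nom i => exact (congrArg f.toFun hs).trans (f.map_nom i)
  | svar x => exact congrArg f.toFun hs
  | top => trivial
  | bot => exact hs
  | neg ψ _ => exact hm.elim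
  | and ψ χ ihψ ihχ => exact ⟨ihψ hm.1 hb.1 hs.1, ihχ hm.2 hb.2 hs.2⟩
  | or ψ χ ihψ ihχ => exact hs.imp (ihψ hm.1 hb.1) (ihχ hm.2 hb.2)
  | dia ψ ih =>
    obtain ⟨v, hwv, hv⟩ := hs
    exact ⟨f.toFun v, f.map_rel hwv, ih hm hb hv⟩
  | box ψ _ => exact hb.elim
  | bind x ψ ih =>
    have := ih hm hb hs
    rwa [comp_updAsg] at this
  | atN i ψ ih =>
    have := ih hm hb hs
    rwa [f.map_nom] at this
  | atV x ψ ih => exact ih hm hb hs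

def toK1 (K : Kripke W) : KripkeHom K K1 where
  toFun _ := ()
  map_rel _ := trivial
  map_prop _ := Set.mem_univ _
  map_nom _ := rfl

end KripkeHom

theorem sat_K1_of_sat {W : Type} {K : Kripke W} {g : ℕ → W} {w : W} {φ : HForm}
    (hm : MonotoneForm φ) (hb : BoxFree φ) (hs : Sat K g w φ) : Sat K1 g1 () φ :=
  (KripkeHom.toK1 K).sat_map hm hb hs

/-- A hybrid formula with operators from `{◇,↓,@}` (no `□`) and only
the monotone Boolean connectives `∧, ∨, ⊥, ⊤` is satisfiable over the class of all
frames iff it is satisfied at `w₁` in `K₁` under `g₁`, and likewise over the class of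
transitive frames. -/
theorem monotone_sat_all_trans (φ : HForm) (h : MonotoneForm φ) (hb : BoxFree φ) :
    (SatisfiableAll φ ↔ Sat K1 g1 () φ) ∧
    (SatisfiableTrans φ ↔ Sat K1 g1 () φ) := by
  refine ⟨⟨?_, fun hs => ⟨Unit, K1, g1, (), hs⟩⟩,
    ⟨?_, fun hs => ⟨Unit, K1, fun _ _ _ _ _ => trivial, g1, (), hs⟩⟩⟩
  · rintro ⟨W, K, g, w, hs⟩
    exact sat_K1_of_sat h hb hs
  · rintro ⟨W, K, -, g, w, hs⟩
    exact sat_K1_of_sat h hb hs
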